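/- Duality for the Lancaster consumption problem: let Q ∈ ℝ^{n×m} be a quality matrix, π ∈ ℝ^m with π⁽ʲ⁾ > 0 for all j, σ ∈ ℝⁿ with σ⁽ⁱ⁾ > 0 for all i, and w > 0. Then max { min_{1≤i≤n} (Qx)⁽ⁱ⁾/σ⁽ⁱ⁾ : x ∈ ℝ^m, x ≥ 0, ⟨π,x⟩ = w } = min { w · max_{1≤j≤m} (Qᵀλ)⁽ʲ⁾/π⁽ʲ⁾ : λ ∈ ℝⁿ, λ ≥ 0, ⟨σ,λ⟩ = 1 }, where both the maximum and the minimum are attained. -/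

import Mathlib

open Finset

private lemma exists_iInf_eq' {ι : Type*} [Fintype ι] [Nonempty ι] (f : ι → ℝ) :
    ∃ i, (⨅ j, f j) = f i ∧ ∀ j, f i ≤ f j := by
  obtain ⟨i, hi⟩ := Finite.exists_min f
  exact ⟨i, le_antisymm (ciInf_le (Set.finite_range f).bddBelow i) (le_ciInf hi), hi⟩

private lemma exists_iSup_eq' {ι : Type*} [Fintype ι] [Nonempty ι] (f : ι → ℝ) :
    ∃ i, (⨆ j, f j) = f i ∧ ∀ j, f j ≤ f i := by
  obtain ⟨i, hi⟩ := Finite.exists_max f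
  exact ⟨i, le_antisymm (ciSup_le hi) (le_ciSup (Set.finite_range f).bddAbove i), hi⟩

private lemma mul_iInf' {ι : Type*} [Fintype ι] [Nonempty ι] (f : ι → ℝ) (w : ℝ) (hw : 0 ≤ w) :
    ⨅ i, w * f i = w * ⨅ i, f i := by
  obtain ⟨i0, h0, hmin⟩ := exists_iInf_eq' f
  rw [h0]
  refine le_antisymm (ciInf_le (Set.finite_range _).bddBelow i0)
    (le_ciInf fun i => by nlinarith [hmin i])

private lemma iInf_le_wsum {ι : Type*} [Fintype ι] [Nonempty ι] (f p : ι → ℝ)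
    (hp : ∀ i, 0 ≤ p i) (hsum : ∑ i, p i = 1) :
    (⨅ i, f i) ≤ ∑ i, p i * f i := by
  calc (⨅ i, f i) = ∑ i, p i * ⨅ j, f j := by rw [← Finset.sum_mul, hsum, one_mul]
  _ ≤ ∑ i, p i * f i := Finset.sum_le_sum fun i _ =>
      mul_le_mul_of_nonneg_left (ciInf_le (Set.finite_range f).bddBelow i) (hp i)

private lemma wsum_le_iSup {ι : Type*} [Fintype ι] [Nonempty ι] (f p : ι → ℝ)
    (hp : ∀ i, 0 ≤ p i) (hsum : ∑ i, p i = 1) :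
    ∑ i, p i * f i ≤ ⨆ i, f i := by
  calc ∑ i, p i * f i ≤ ∑ i, p i * ⨆ j, f j := Finset.sum_le_sum fun i _ =>
      mul_le_mul_of_nonneg_left (le_ciSup (Set.finite_range f).bddAbove i) (hp i)
  _ = ⨆ j, f j := by rw [← Finset.sum_mul, hsum, one_mul]

private lemma clm_eval {n : ℕ} (f : (Fin n → ℝ) →L[ℝ] ℝ) (u : Fin n → ℝ) :
    f u = ∑ i, u i * f (Pi.single i 1) := by
  have h : u = ∑ i, u i • (Pi.single i 1 : Fin n → ℝ) := by
    ext j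
    simp [Pi.single_apply]
  conv_lhs => rw [h]
  rw [map_sum]
  simp [smul_eq_mul]

private theorem minimax' {n m : ℕ} (hn : 0 < n) (hm : 0 < m) (A : Matrix (Fin n) (Fin m) ℝ) :
    ∃ y μ, y ∈ stdSimplex ℝ (Fin m) ∧ μ ∈ stdSimplex ℝ (Fin n) ∧
      (∀ y' ∈ stdSimplex ℝ (Fin m), (⨅ i, A.mulVec y' i) ≤ ⨅ i, A.mulVec y i) ∧
      (∀ μ' ∈ stdSimplex ℝ (Fin n), (⨆ j, A.transpose.mulVec μ j) ≤ ⨆ j, A.transpose.mulVec μ' j) ∧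
      (⨅ i, A.mulVec y i) = ⨆ j, A.transpose.mulVec μ j := by
  haveI : NeZero n := ⟨hn.ne'⟩
  haveI : NeZero m := ⟨hm.ne'⟩
  set S := stdSimplex ℝ (Fin m) with hS
  -- the primal objective, as a Finset.inf' for continuity purposes
  set g : (Fin m → ℝ) → ℝ := fun y => Finset.univ.inf' Finset.univ_nonempty (fun i => A.mulVec y i)
    with hgdef
  have hgeq : ∀ y, g y = ⨅ i, A.mulVec y i := fun y => Finset.inf'_univ_eq_ciInf _
  have hgcont : Continuous g := by
    apply Continuous.finset_inf'_apply Finset.univ_nonempty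
    intro i _
    simp only [Matrix.mulVec, dotProduct]
    exact continuous_finset_sum _ fun j _ => continuous_const.mul (continuous_apply j)
  -- maximize g over the simplex
  obtain ⟨ystar, hyS, hymax⟩ := (isCompact_stdSimplex ℝ (Fin m)).exists_isMaxOn
    ⟨_, single_mem_stdSimplex ℝ (0 : Fin m)⟩ hgcont.continuousOn
  set v : ℝ := ⨅ i, A.mulVec ystar i with hv
  have hmaxv : ∀ y' ∈ S, (⨅ i, A.mulVec y' i) ≤ v := by
    intro y' hy'
    have := hymax hy'
    simp only [Set.mem_setOf_eq] at this
    rw [hgeq, hgeq] at this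
    exact this
  -- the two convex sets
  set K : Set (Fin n → ℝ) := {z | ∃ y ∈ S, ∀ i, z i ≤ A.mulVec y i} with hK
  set O : Set (Fin n → ℝ) := Set.univ.pi fun _ => Set.Ioi v with hO
  have hOmem : ∀ u : Fin n → ℝ, u ∈ O ↔ ∀ i, v < u i := by
    intro u; simp [hO, Set.mem_pi]
  have hKconv : Convex ℝ K := by
    intro z1 hz1 z2 hz2 a b ha hb hab
    obtain ⟨y1, hy1, h1⟩ := hz1
    obtain ⟨y2, hy2, h2⟩ := hz2
    refine ⟨a • y1 + b • y2, convex_stdSimplex ℝ (Fin m) hy1 hy2 ha hb hab, fun i => ?_⟩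
    have e : A.mulVec (a • y1 + b • y2) i = a * A.mulVec y1 i + b * A.mulVec y2 i := by
      rw [Matrix.mulVec_add, Matrix.mulVec_smul, Matrix.mulVec_smul]
      simp [smul_eq_mul]
    rw [e]
    have := h1 i; have := h2 i
    simp only [Pi.add_apply, Pi.smul_apply, smul_eq_mul]
    nlinarith
  have hOconv : Convex ℝ O := convex_pi fun _ _ => convex_Ioi v
  have hOopen : IsOpen O := isOpen_set_pi Set.finite_univ fun _ _ => isOpen_Ioi
  have hdisj : Disjoint O K := by
    rw [Set.disjoint_left]
    rintro u hu ⟨y, hyS', hle⟩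
    obtain ⟨i0, hi0, _⟩ := exists_iInf_eq' (fun i => A.mulVec y i)
    have h1 : v < ⨅ i, A.mulVec y i := by
      rw [hi0]; exact lt_of_lt_of_le ((hOmem u).1 hu i0) (hle i0)
    exact absurd (hmaxv y hyS') (not_le.mpr h1)
  obtain ⟨f, c, hfO, hfK⟩ := geometric_hahn_banach_open hOconv hOopen hKconv hdisj
  -- the candidate dual weights
  set μ'' : Fin n → ℝ := fun i => -f (Pi.single i 1) with hμ''
  have hflin : ∀ u : Fin n → ℝ, f u = -∑ i, u i * μ'' i := by
    intro u
    rw [clm_eval f u]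
    simp [hμ'']
  set y0 : Fin m → ℝ := Pi.single (0 : Fin m) 1 with hy0
  have hy0S : y0 ∈ S := single_mem_stdSimplex ℝ 0
  have hk0 : A.mulVec y0 ∈ K := ⟨y0, hy0S, fun i => le_rfl⟩
  have hck0 : c ≤ f (A.mulVec y0) := hfK _ hk0
  have hμnn : ∀ i, 0 ≤ μ'' i := by
    intro i
    by_contra hlt
    push_neg at hlt
    have hfe : 0 < f (Pi.single i 1) := by simpa [hμ''] using hlt
    set t : ℝ := (f (A.mulVec y0) - c + 1) / f (Pi.single i 1) with ht
    have htpos : 0 ≤ t := div_nonneg (by linarith) hfe.le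
    have hz : (A.mulVec y0 - t • (Pi.single i 1 : Fin n → ℝ)) ∈ K := by
      refine ⟨y0, hy0S, fun i' => ?_⟩
      have : 0 ≤ t * (Pi.single i 1 : Fin n → ℝ) i' := by
        apply mul_nonneg htpos
        rcases eq_or_ne i' i with h | h <;> simp [Pi.single_apply, h]
      simp only [Pi.sub_apply, Pi.smul_apply, smul_eq_mul]
      linarith
    have h2' := hfK _ hz
    rw [map_sub, map_smul, smul_eq_mul] at h2'
    have hcancel : t * f (Pi.single i 1) = f (A.mulVec y0) - c + 1 :=
      div_mul_cancel₀ _ hfe.ne'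
    linarith
  set s0 : ℝ := ∑ i, μ'' i with hs0
  have hs0nn : 0 ≤ s0 := Finset.sum_nonneg fun i _ => hμnn i
  have hs0pos : 0 < s0 := by
    rcases hs0nn.lt_or_eq with h | h
    · exact h
    · exfalso
      have hall : ∀ i ∈ Finset.univ, μ'' i = 0 :=
        (Finset.sum_eq_zero_iff_of_nonneg fun i _ => hμnn i).1 h.symm
      have hf0 : ∀ u : Fin n → ℝ, f u = 0 := by
        intro u
        rw [hflin u, Finset.sum_eq_zero fun i hi => by rw [hall i hi, mul_zero], neg_zero]
      have hu0 : (fun _ : Fin n => v + 1) ∈ O := (hOmem _).2 fun i => by linarith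
      have := hfO _ hu0
      rw [hf0] at this
      have := hck0
      rw [hf0] at this
      linarith
  -- -c ≤ v * s0
  have hcle : -c ≤ v * s0 := by
    by_contra hcon
    push_neg at hcon
    set ε : ℝ := (-c - v * s0) / (2 * s0) with hε
    have hεpos : 0 < ε := div_pos (by linarith) (by linarith)
    have hu : (fun _ : Fin n => v + ε) ∈ O := (hOmem _).2 fun i => by linarith
    have hfu := hfO _ hu
    rw [hflin] at hfu
    have hsum : ∑ i, (v + ε) * μ'' i = (v + ε) * s0 := by
      rw [← Finset.mul_sum]
    rw [hsum] at hfu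
    have : ε * s0 = (-c - v * s0) / 2 := by
      rw [hε]; field_simp
    nlinarith
  set μ : Fin n → ℝ := fun i => μ'' i / s0 with hμdef
  have hμS : μ ∈ stdSimplex ℝ (Fin n) := by
    constructor
    · intro i; exact div_nonneg (hμnn i) hs0nn
    · rw [← Finset.sum_div]; field_simp; exact hs0.symm
  -- the key bound: sup_j (Aᵀμ)_j ≤ v
  have hAμj : ∀ j, A.transpose.mulVec μ j ≤ v := by
    intro j
    have hvert : A.mulVec (Pi.single j 1) ∈ K :=
      ⟨_, single_mem_stdSimplex ℝ j, fun i => le_rfl⟩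
    have h2' := hfK _ hvert
    rw [hflin] at h2'
    have hAej : ∀ i, A.mulVec (Pi.single j 1) i = A i j := by
      intro i
      simp [Matrix.mulVec, dotProduct, Pi.single_apply, mul_ite]
    have hsum : ∑ i, A.mulVec (Pi.single j 1) i * μ'' i = ∑ i, A i j * μ'' i := by
      exact Finset.sum_congr rfl fun i _ => by rw [hAej i]
    rw [hsum] at h2'
    -- c ≤ -(∑ i, A i j * μ'' i), so ∑ ≤ -c ≤ v * s0
    have hle : ∑ i, A i j * μ'' i ≤ v * s0 := by linarith
    have : A.transpose.mulVec μ j = (∑ i, A i j * μ'' i) / s0 := by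
      simp only [Matrix.mulVec, dotProduct, Matrix.transpose_apply, hμdef]
      rw [Finset.sum_div]
      exact Finset.sum_congr rfl fun i _ => by ring
    rw [this]
    rw [div_le_iff₀ hs0pos]
    linarith
  have hsupμ : (⨆ j, A.transpose.mulVec μ j) ≤ v := ciSup_le hAμj
  -- weak duality
  have hweak : ∀ μ' ∈ stdSimplex ℝ (Fin n), v ≤ ⨆ j, A.transpose.mulVec μ' j := by
    intro μ' hμ'
    have h1 : v ≤ ∑ i, μ' i * A.mulVec ystar i :=
      iInf_le_wsum _ _ hμ'.1 hμ'.2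
    have h2 : ∑ i, μ' i * A.mulVec ystar i = ∑ j, ystar j * A.transpose.mulVec μ' j := by
      simp only [Matrix.mulVec, dotProduct, Matrix.transpose_apply,
        Finset.mul_sum]
      rw [Finset.sum_comm]
      exact Finset.sum_congr rfl fun j _ => Finset.sum_congr rfl fun i _ => by ring
    have h3 : ∑ j, ystar j * A.transpose.mulVec μ' j ≤ ⨆ j, A.transpose.mulVec μ' j :=
      wsum_le_iSup _ _ hyS.1 hyS.2
    linarith
  refine ⟨ystar, μ, hyS, hμS, hmaxv, ?_, ?_⟩
  · intro μ' hμ'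
    exact le_trans hsupμ (hweak μ' hμ')
  · exact le_antisymm (hweak μ hμS) hsupμ

/-- Duality for the Lancaster consumption problem: the primal maximum of the
Leontieff utility `min_i (Qx)⁽ⁱ⁾/σ⁽ⁱ⁾` over nonnegative demands with `⟨π,x⟩ = w` equals the
dual minimum of `w·max_j (Qᵀλ)⁽ʲ⁾/π⁽ʲ⁾` over nonnegative `λ` with `⟨σ,λ⟩ = 1`, and both
the maximum and the minimum are attained. -/
theorem lancaster_duality
    (n m : ℕ) (hn : 0 < n) (hm : 0 < m)
    (Q : Matrix (Fin n) (Fin m) ℝ)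
    (π : Fin m → ℝ) (hπ : ∀ j, 0 < π j)
    (σ : Fin n → ℝ) (hσ : ∀ i, 0 < σ i)
    (w : ℝ) (hw : 0 < w) :
    ∃ x : Fin m → ℝ, ∃ lam : Fin n → ℝ,
      (∀ j, 0 ≤ x j) ∧ (∑ j, π j * x j = w) ∧
      (∀ i, 0 ≤ lam i) ∧ (∑ i, σ i * lam i = 1) ∧
      (∀ x' : Fin m → ℝ, (∀ j, 0 ≤ x' j) → (∑ j, π j * x' j = w) →
        (⨅ i : Fin n, Q.mulVec x' i / σ i) ≤ ⨅ i : Fin n, Q.mulVec x i / σ i) ∧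
      (∀ lam' : Fin n → ℝ, (∀ i, 0 ≤ lam' i) → (∑ i, σ i * lam' i = 1) →
        (w * ⨆ j : Fin m, Q.transpose.mulVec lam j / π j)
          ≤ w * ⨆ j : Fin m, Q.transpose.mulVec lam' j / π j) ∧
      (⨅ i : Fin n, Q.mulVec x i / σ i)
        = w * ⨆ j : Fin m, Q.transpose.mulVec lam j / π j := by
  haveI : NeZero n := ⟨hn.ne'⟩
  haveI : NeZero m := ⟨hm.ne'⟩
  set A : Matrix (Fin n) (Fin m) ℝ := fun i j => Q i j / (σ i * π j) with hA
  obtain ⟨y, μ, hyS, hμS, hymax, hμmin, heq⟩ := minimax' hn hm A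
  -- pointwise translations between the two formulations
  have hprim : ∀ (z : Fin m → ℝ) (i), Q.mulVec (fun j => w * z j / π j) i / σ i
      = w * A.mulVec z i := by
    intro z i
    simp only [Matrix.mulVec, dotProduct, hA]
    rw [Finset.sum_div, Finset.mul_sum]
    refine Finset.sum_congr rfl fun j _ => ?_
    have h1 : (σ i) ≠ 0 := (hσ i).ne'
    have h2 : (π j) ≠ 0 := (hπ j).ne'
    field_simp
  have hdual : ∀ (ν : Fin n → ℝ) (j), Q.transpose.mulVec (fun i => ν i / σ i) j / π j
      = A.transpose.mulVec ν j := by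
    intro ν j
    simp only [Matrix.mulVec, dotProduct, Matrix.transpose_apply, hA]
    rw [Finset.sum_div]
    refine Finset.sum_congr rfl fun i _ => ?_
    have h1 : (σ i) ≠ 0 := (hσ i).ne'
    have h2 : (π j) ≠ 0 := (hπ j).ne'
    field_simp
    show Q i j * ν i = ν i * σ i * π j * (Q i j / (σ i * π j))
    field_simp
  refine ⟨fun j => w * y j / π j, fun i => μ i / σ i, ?_, ?_, ?_, ?_, ?_, ?_, ?_⟩
  · intro j
    exact div_nonneg (mul_nonneg hw.le (hyS.1 j)) (hπ j).le
  · have : ∀ j ∈ Finset.univ, π j * (w * y j / π j) = w * y j := fun j _ => by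
      rw [mul_comm, div_mul_cancel₀ _ (hπ j).ne']
    rw [Finset.sum_congr rfl this, ← Finset.mul_sum, hyS.2, mul_one]
  · intro i
    exact div_nonneg (hμS.1 i) (hσ i).le
  · have : ∀ i ∈ Finset.univ, σ i * (μ i / σ i) = μ i := fun i _ => by
      rw [mul_comm, div_mul_cancel₀ _ (hσ i).ne']
    rw [Finset.sum_congr rfl this, hμS.2]
  · -- primal optimality
    intro x' hx' hbud
    set y' : Fin m → ℝ := fun j => π j * x' j / w with hy'
    have hy'S : y' ∈ stdSimplex ℝ (Fin m) := by
      constructor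
      · intro j
        exact div_nonneg (mul_nonneg (hπ j).le (hx' j)) hw.le
      · rw [← Finset.sum_div, hbud, div_self hw.ne']
    have hx'eq : x' = fun j => w * y' j / π j := by
      funext j
      have h2 : (π j) ≠ 0 := (hπ j).ne'
      simp only [hy']
      field_simp
    calc (⨅ i : Fin n, Q.mulVec x' i / σ i)
        = ⨅ i, w * A.mulVec y' i := by
          rw [hx'eq]; exact iInf_congr fun i => hprim y' i
      _ = w * ⨅ i, A.mulVec y' i := mul_iInf' _ w hw.le
      _ ≤ w * ⨅ i, A.mulVec y i :=
          mul_le_mul_of_nonneg_left (hymax y' hy'S) hw.le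
      _ = ⨅ i, w * A.mulVec y i := (mul_iInf' _ w hw.le).symm
      _ = ⨅ i : Fin n, Q.mulVec (fun j => w * y j / π j) i / σ i :=
          (iInf_congr fun i => hprim y i).symm
  · -- dual optimality
    intro lam' hlam' hsig
    set μ' : Fin n → ℝ := fun i => σ i * lam' i with hμ'
    have hμ'S : μ' ∈ stdSimplex ℝ (Fin n) := by
      constructor
      · intro i
        exact mul_nonneg (hσ i).le (hlam' i)
      · exact hsig
    have hlam'eq : lam' = fun i => μ' i / σ i := by
      funext i
      have h1 : (σ i) ≠ 0 := (hσ i).ne'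
      simp only [hμ']
      field_simp
    refine mul_le_mul_of_nonneg_left ?_ hw.le
    calc (⨆ j : Fin m, Q.transpose.mulVec (fun i => μ i / σ i) j / π j)
        = ⨆ j, A.transpose.mulVec μ j := iSup_congr fun j => hdual μ j
      _ ≤ ⨆ j, A.transpose.mulVec μ' j := hμmin μ' hμ'S
      _ = ⨆ j : Fin m, Q.transpose.mulVec lam' j / π j := by
          rw [hlam'eq]; exact (iSup_congr fun j => hdual μ' j).symm
  · -- equality of the optimal values
    calc (⨅ i : Fin n, Q.mulVec (fun j => w * y j / π j) i / σ i)
        = ⨅ i, w * A.mulVec y i := iInf_congr fun i => hprim y i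
      _ = w * ⨅ i, A.mulVec y i := mul_iInf' _ w hw.le
      _ = w * ⨆ j, A.transpose.mulVec μ j := by rw [heq]
      _ = w * ⨆ j : Fin m, Q.transpose.mulVec (fun i => μ i / σ i) j / π j := by
          rw [iSup_congr fun j => hdual μ j]
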